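/- arXiv:1612.08244 — 2 statements merged into one kernel-verified Lean document; each statement's English description precedes it below -/
import Mathlib

section
/- Let L be a Leibniz algebra over a field 𝕜 with left center Z. The extended symmetric product on S^•(Z)⊗L factors through φ: for x, x', y, y' ∈ S^•(Z)⊗L, if φ(x) = φ(x') and φ(y) = φ(y'), then (x,y) = (x',y'). Consequently, the operation ω•η on representable cochains does not depend on the choice of φ-preimages ω̃ and η̃. -/
open scoped TensorProduct

universe u v w

/-- A (left) Leibniz algebra over a field `𝕜`. -/
structure LeibnizAlg (𝕜 : Type u) [Field 𝕜] (L : Type v) [AddCommGroup L] [Module 𝕜 L] where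
  br : L →ₗ[𝕜] L →ₗ[𝕜] L
  leibniz : ∀ a b c : L, br a (br b c) = br (br a b) c + br b (br a c)

namespace LeibnizAlg

variable {𝕜 : Type u} [Field 𝕜] {L : Type v} [AddCommGroup L] [Module 𝕜 L]
variable (A : LeibnizAlg 𝕜 L)

/-- The left center `Z = {z | z ∘ e = 0 for all e}`. -/
def leftCenter : Submodule 𝕜 L where
  carrier := {z | ∀ e : L, A.br z e = 0}
  add_mem' := by
    intro a b ha hb
    simp only [Set.mem_setOf_eq] at *
    intro e
    rw [map_add, LinearMap.add_apply, ha e, hb e, add_zero]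
  zero_mem' := by
    simp only [Set.mem_setOf_eq]
    intro e
    rw [map_zero, LinearMap.zero_apply]
  smul_mem' := by
    intro c x hx
    simp only [Set.mem_setOf_eq] at *
    intro e
    rw [map_smul, LinearMap.smul_apply, hx e, smul_zero]

lemma mem_leftCenter_iff {z : L} : z ∈ A.leftCenter ↔ ∀ e : L, A.br z e = 0 := Iff.rfl

/-- The symmetric product `(a,b) = a∘b + b∘a`. -/
def sp (a b : L) : L := A.br a b + A.br b a

lemma sp_mem (a b : L) : A.sp a b ∈ A.leftCenter := by
  rw [mem_leftCenter_iff]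
  intro e
  have h1 := A.leibniz a b e
  have h2 := A.leibniz b a e
  have hx : A.br (A.br a b) e = A.br a (A.br b e) - A.br b (A.br a e) :=
    eq_sub_iff_add_eq.mpr h1.symm
  have hy : A.br (A.br b a) e = A.br b (A.br a e) - A.br a (A.br b e) :=
    eq_sub_iff_add_eq.mpr h2.symm
  rw [sp, map_add, LinearMap.add_apply, hx, hy]
  abel

/-- The symmetric product, seen as valued in the left center. -/
def spZ (a b : L) : A.leftCenter := ⟨A.sp a b, A.sp_mem a b⟩

lemma br_mem (e : L) (f : A.leftCenter) : A.br e (f : L) ∈ A.leftCenter := by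
  rw [mem_leftCenter_iff]
  intro e'
  have h := A.leibniz e (f : L) e'
  have hf : A.br (f : L) e' = 0 := (A.mem_leftCenter_iff.mp f.2) e'
  have hf2 : A.br (f : L) (A.br e e') = 0 := (A.mem_leftCenter_iff.mp f.2) _
  rw [hf] at h
  rw [map_zero] at h
  rw [hf2, add_zero] at h
  exact h.symm

/-- The bracket of `L` on its left center. -/
def brZ (e : L) (f : A.leftCenter) : A.leftCenter := ⟨A.br e (f : L), A.br_mem e f⟩

/-- The symmetric product as a bilinear map into the left center. -/
noncomputable def spL : L →ₗ[𝕜] L →ₗ[𝕜] A.leftCenter :=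
  LinearMap.mk₂ 𝕜 A.spZ
    (fun a a' b => Subtype.ext (by
      simp only [spZ, sp, map_add, LinearMap.add_apply, Submodule.coe_add]
      abel))
    (fun c a b => Subtype.ext (by
      simp only [spZ, sp, map_smul, LinearMap.smul_apply, SetLike.val_smul, smul_add]))
    (fun a b b' => Subtype.ext (by
      simp only [spZ, sp, map_add, LinearMap.add_apply, Submodule.coe_add]
      abel))
    (fun c a b => Subtype.ext (by
      simp only [spZ, sp, map_smul, LinearMap.smul_apply, SetLike.val_smul, smul_add]))

end LeibnizAlg

/-- `(S, ι)` is (a model of) the symmetric algebra of the module `Z`: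
it satisfies the universal property. -/
def IsSymAlg {𝕜 : Type u} [Field 𝕜] {Z : Type v} [AddCommGroup Z] [Module 𝕜 Z]
    (S : Type w) [CommRing S] [Algebra 𝕜 S] (ι : Z →ₗ[𝕜] S) : Prop :=
  ∀ (B : Type (max u v w)) [CommRing B] [Algebra 𝕜 B] (g : Z →ₗ[𝕜] B),
    ∃! h : S →ₐ[𝕜] B, ∀ z : Z, h (ι z) = g z

section Shuffles

/-- All ways of splitting a list into a signed pair of complementary subsequences. -/
def shSplits {α : Type*} : List α → List (ℤ × List α × List α)
  | [] => [(1, [], [])]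
  | a :: l =>
      ((shSplits l).map fun t => (t.1, a :: t.2.1, t.2.2)) ++
      ((shSplits l).map fun t => ((-1) ^ t.2.1.length * t.1, t.2.1, a :: t.2.2))

/-- Signed sum over all `(p, l.length - p)`-shuffles of the list `l`. -/
def shSum {α : Type*} {S : Type*} [AddCommGroup S] (p : ℕ) (l : List α)
    (F : List α → List α → S) : S :=
  (((shSplits l).filter fun t => t.2.1.length == p).map fun t => t.1 • F t.2.1 t.2.2).sum

/-- Unsigned sum over all `(p, l.length - p)`-shuffles of the list `l`. -/
def shSumU {α : Type*} {S : Type*} [AddCommMonoid S] (p : ℕ) (l : List α)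
    (F : List α → List α → S) : S :=
  (((shSplits l).filter fun t => t.2.1.length == p).map fun t => F t.2.1 t.2.2).sum

end Shuffles

section Cochains

variable {𝕜 : Type u} [Field 𝕜] {L : Type v} [AddCommGroup L] [Module 𝕜 L]
variable (A : LeibnizAlg 𝕜 L)
variable (S : Type w) [CommRing S] [Algebra 𝕜 S]
variable (ι : A.leftCenter →ₗ[𝕜] S)

/-- `ω` is an `n`-cochain in the standard complex `C(L) = C(L, Z, S^•(Z))`:
its component `ω k`, defined on tuples `es` of `n - 2k` elements of `L` and `k`
elements of the left center, is multilinear, symmetric in the `Z`-arguments, and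
weakly skew-symmetric in the `L`-arguments. -/
structure IsCochain (n : ℕ) (ω : ℕ → List L → List A.leftCenter → S) : Prop where
  add_e : ∀ (k : ℕ) (p q : List L) (x y : L) (fs : List A.leftCenter),
    2*k + (p.length + 1 + q.length) = n → fs.length = k →
    ω k (p ++ (x + y) :: q) fs = ω k (p ++ x :: q) fs + ω k (p ++ y :: q) fs
  smul_e : ∀ (k : ℕ) (p q : List L) (c : 𝕜) (x : L) (fs : List A.leftCenter),
    2*k + (p.length + 1 + q.length) = n → fs.length = k →
    ω k (p ++ (c • x) :: q) fs = c • ω k (p ++ x :: q) fs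
  add_f : ∀ (k : ℕ) (es : List L) (p q : List A.leftCenter) (x y : A.leftCenter),
    2*k + es.length = n → p.length + 1 + q.length = k →
    ω k es (p ++ (x + y) :: q) = ω k es (p ++ x :: q) + ω k es (p ++ y :: q)
  smul_f : ∀ (k : ℕ) (es : List L) (p q : List A.leftCenter) (c : 𝕜) (x : A.leftCenter),
    2*k + es.length = n → p.length + 1 + q.length = k →
    ω k es (p ++ (c • x) :: q) = c • ω k es (p ++ x :: q)
  symm_f : ∀ (k : ℕ) (es : List L) (p q : List A.leftCenter) (x y : A.leftCenter),
    2*k + es.length = n → p.length + 2 + q.length = k →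
    ω k es (p ++ x :: y :: q) = ω k es (p ++ y :: x :: q)
  skew : ∀ (k : ℕ) (p q : List L) (x y : L) (fs : List A.leftCenter),
    2*k + (p.length + 2 + q.length) = n → fs.length = k →
    ω k (p ++ x :: y :: q) fs + ω k (p ++ y :: x :: q) fs
      = - ω (k+1) (p ++ q) (A.spZ x y :: fs)

/-- The product of an `n`-cochain and an `m`-cochain. -/
def cmul (n m : ℕ) (ω η : ℕ → List L → List A.leftCenter → S) :
    ℕ → List L → List A.leftCenter → S :=
  fun k es fs => ∑ i ∈ Finset.range (k+1),
    if 2*i ≤ n ∧ 2*(k-i) ≤ m then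
      shSum (n - 2*i) es fun es₁ es₂ =>
        shSumU i fs fun fs₁ fs₂ => ω i es₁ fs₁ * η (k-i) es₂ fs₂
    else 0

/-- The operator `d₀` of the standard complex, where `ρ` is the action of `L` on
`S^•(Z)` by derivations. -/
def cd0 (ρ : L → Derivation 𝕜 S S) (ω : ℕ → List L → List A.leftCenter → S) :
    ℕ → List L → List A.leftCenter → S :=
  fun k es fs =>
    (∑ a ∈ Finset.range es.length,
      (-1 : ℤ)^a • ρ (es.getD a 0) (ω k (es.eraseIdx a) fs))
    + ∑ a ∈ Finset.range es.length, ∑ b ∈ Finset.Ico (a+1) es.length,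
        (-1 : ℤ)^(a+1) •
          ω k ((es.eraseIdx a).set (b-1) (A.br (es.getD a 0) (es.getD b 0))) fs

/-- The operator `δ` of the standard complex. -/
def cdel (ω : ℕ → List L → List A.leftCenter → S) :
    ℕ → List L → List A.leftCenter → S :=
  fun k es fs => ∑ j ∈ Finset.range fs.length,
    ω (k-1) (((fs.getD j 0 : A.leftCenter) : L) :: es) (fs.eraseIdx j)

/-- The symmetric product with values pushed into `S = S^•(Z)`. -/
noncomputable def spS : L →ₗ[𝕜] L →ₗ[𝕜] S := (A.spL).compr₂ ι

/-- The `S^•(Z)`-bilinear extension of the symmetric product to `S^•(Z) ⊗ L`. -/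
noncomputable def pairT : (S ⊗[𝕜] L) →ₗ[𝕜] (S ⊗[𝕜] L) →ₗ[𝕜] S :=
  TensorProduct.curry <|
    (TensorProduct.lift (LinearMap.mul 𝕜 S)).comp <|
      (TensorProduct.map (TensorProduct.lift (LinearMap.mul 𝕜 S))
        (TensorProduct.lift (spS A S ι))).comp
        (TensorProduct.tensorTensorTensorComm 𝕜 S L S L).toLinearMap

/-- `ω` is a representable `n`-cochain: each of the maps
`e ↦ ω k (es ++ [e]) fs` lies in the image of `φ = pairT`. -/
def IsRepr (n : ℕ) (ω : ℕ → List L → List A.leftCenter → S) : Prop :=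
  ∀ (k : ℕ) (es : List L) (fs : List A.leftCenter),
    2*k + (es.length + 1) = n → fs.length = k →
    ∃ x : S ⊗[𝕜] L, ∀ e : L, pairT A S ι x ((1 : S) ⊗ₜ[𝕜] e) = ω k (es ++ [e]) fs

/-- `ωt` is a choice of `φ`-preimages `ω̃` for the representable cochain `ω`. -/
def IsPre (n : ℕ) (ω : ℕ → List L → List A.leftCenter → S)
    (ωt : ℕ → List L → List A.leftCenter → S ⊗[𝕜] L) : Prop :=
  ∀ (k : ℕ) (es : List L) (fs : List A.leftCenter),
    2*k + (es.length + 1) = n → fs.length = k →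
    ∀ e : L, pairT A S ι (ωt k es fs) ((1 : S) ⊗ₜ[𝕜] e) = ω k (es ++ [e]) fs

/-- `ωc k es x fs` is the extension `ω̌` of `ω (k+1) es (·::fs)` from `Z` to all of
`S = S^•(Z)` in its first `Z`-slot, by the Leibniz rule. -/
structure IsExt (n : ℕ) (ω : ℕ → List L → List A.leftCenter → S)
    (ωc : ℕ → List L → S → List A.leftCenter → S) : Prop where
  on_gen : ∀ (k : ℕ) (es : List L) (fs : List A.leftCenter) (f : A.leftCenter),
    2*(k+1) + es.length = n → fs.length = k →
    ωc k es (ι f) fs = ω (k+1) es (f :: fs)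
  map_add : ∀ (k : ℕ) (es : List L) (fs : List A.leftCenter) (x y : S),
    2*(k+1) + es.length = n → fs.length = k →
    ωc k es (x + y) fs = ωc k es x fs + ωc k es y fs
  map_smul : ∀ (k : ℕ) (es : List L) (fs : List A.leftCenter) (c : 𝕜) (x : S),
    2*(k+1) + es.length = n → fs.length = k →
    ωc k es (c • x) fs = c • ωc k es x fs
  mul_rule : ∀ (k : ℕ) (es : List L) (fs : List A.leftCenter) (x y : S),
    2*(k+1) + es.length = n → fs.length = k →
    ωc k es (x * y) fs = x * ωc k es y fs + y * ωc k es x fs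

/-- The operation `ω ◇ η` built from the Leibniz-rule extension `ωc` of `ω`. -/
def cdiam (n m : ℕ) (ωc : ℕ → List L → S → List A.leftCenter → S)
    (η : ℕ → List L → List A.leftCenter → S) : ℕ → List L → List A.leftCenter → S :=
  fun k es fs => ∑ i ∈ Finset.range (k+1),
    if 2*(i+1) ≤ n ∧ 2*(k-i) ≤ m then
      shSum (n - 2*i - 2) es fun es₁ es₂ =>
        shSumU (k-i) fs fun fs₁ fs₂ => ωc i es₁ (η (k-i) es₂ fs₁) fs₂
    else 0

/-- The operation `ω • η` built from chosen `φ`-preimages `ωt`, `ηt`. -/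
noncomputable def cbull (n m : ℕ)
    (ωt ηt : ℕ → List L → List A.leftCenter → S ⊗[𝕜] L) :
    ℕ → List L → List A.leftCenter → S :=
  fun k es fs => (-1 : ℤ)^(m-1) • ∑ i ∈ Finset.range (k+1),
    if 2*i + 1 ≤ n ∧ 2*(k-i) + 1 ≤ m then
      shSum (n - 2*i - 1) es fun es₁ es₂ =>
        shSumU i fs fun fs₁ fs₂ => pairT A S ι (ωt i es₁ fs₁) (ηt (k-i) es₂ fs₂)
    else 0

/-- The bracket `{ω, η} = ω•η + ω◇η − (−1)^{nm} η◇ω` of representable cochains. -/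
noncomputable def cpbr (n m : ℕ)
    (ω η : ℕ → List L → List A.leftCenter → S)
    (ωt ηt : ℕ → List L → List A.leftCenter → S ⊗[𝕜] L)
    (ωc ηc : ℕ → List L → S → List A.leftCenter → S) :
    ℕ → List L → List A.leftCenter → S :=
  fun k es fs => cbull A S ι n m ωt ηt k es fs + cdiam A S n m ωc η k es fs
    - (-1 : ℤ)^(n*m) • cdiam A S m n ηc ω k es fs

/-- The canonical 3-cochain `Θ`. -/
def ThetaC : ℕ → List L → List A.leftCenter → S :=
  fun k es fs => match k, es, fs with
    | 0, [e₁, e₂, e₃], [] => ι (A.spZ (A.br e₁ e₂) e₃)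
    | 1, [e], [f] => - ι (A.spZ e (f : L))
    | _, _, _ => 0

/-- The 2-cochain `ζ` with `ζ₀ = (·,·)` and `ζ₁(f) = −2f`. -/
def zetaC : ℕ → List L → List A.leftCenter → S :=
  fun k es fs => match k, es, fs with
    | 0, [e₁, e₂], [] => ι (A.spZ e₁ e₂)
    | 1, [], [f] => (-2 : 𝕜) • ι f
    | _, _, _ => 0

/-- The representable 1-cochain `e^♭ = (e, ·)`. -/
def eflat (e : L) : ℕ → List L → List A.leftCenter → S :=
  fun k es fs => match k, es, fs with
    | 0, [e'], [] => ι (A.spZ e e')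
    | _, _, _ => 0

end Cochains

section Theorems

variable {𝕜 : Type u} [Field 𝕜] {L : Type v} [AddCommGroup L] [Module 𝕜 L]

lemma shSplits_len {α : Type*} (l : List α) :
    ∀ t ∈ shSplits l, t.2.1.length + t.2.2.length = l.length := by
  induction l with
  | nil =>
    intro t ht
    simp only [shSplits, List.mem_singleton] at ht
    subst ht; simp
  | cons a l ih =>
    intro t ht
    simp only [shSplits, List.mem_append, List.mem_map] at ht
    rcases ht with ⟨s, hs, rfl⟩ | ⟨s, hs, rfl⟩ <;>
      simp only [List.length_cons] <;> have := ih s hs <;> omega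

lemma shSum_congr {α : Type*} {S : Type*} [AddCommGroup S] (p : ℕ) (l : List α)
    (F G : List α → List α → S)
    (h : ∀ l₁ l₂ : List α, l₁.length = p → l₁.length + l₂.length = l.length →
      F l₁ l₂ = G l₁ l₂) : shSum p l F = shSum p l G := by
  unfold shSum
  congr 1
  apply List.map_congr_left
  intro t ht
  have ht' := List.mem_filter.mp ht
  have hlen := shSplits_len l t ht'.1
  have hp : t.2.1.length = p := by
    have := ht'.2; simpa using this
  rw [h t.2.1 t.2.2 hp hlen]

lemma shSumU_congr {α : Type*} {S : Type*} [AddCommMonoid S] (p : ℕ) (l : List α)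
    (F G : List α → List α → S)
    (h : ∀ l₁ l₂ : List α, l₁.length = p → l₁.length + l₂.length = l.length →
      F l₁ l₂ = G l₁ l₂) : shSumU p l F = shSumU p l G := by
  unfold shSumU
  congr 1
  apply List.map_congr_left
  intro t ht
  have ht' := List.mem_filter.mp ht
  have hlen := shSplits_len l t ht'.1
  have hp : t.2.1.length = p := by
    have := ht'.2; simpa using this
  rw [h t.2.1 t.2.2 hp hlen]

lemma pairT_tmul (A : LeibnizAlg 𝕜 L) (S : Type w) [CommRing S] [Algebra 𝕜 S]
    (ι : A.leftCenter →ₗ[𝕜] S) (s t : S) (e f : L) :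
    pairT A S ι (s ⊗ₜ[𝕜] e) (t ⊗ₜ[𝕜] f) = (s * t) * ι (A.spZ e f) := by
  simp [pairT, spS, TensorProduct.tensorTensorTensorComm_tmul, LeibnizAlg.spL]

lemma pairT_symm (A : LeibnizAlg 𝕜 L) (S : Type w) [CommRing S] [Algebra 𝕜 S]
    (ι : A.leftCenter →ₗ[𝕜] S) (x y : S ⊗[𝕜] L) :
    pairT A S ι x y = pairT A S ι y x := by
  induction x using TensorProduct.induction_on with
  | zero => simp
  | add a b ha hb => simp [map_add, ha, hb]
  | tmul s e =>
    induction y using TensorProduct.induction_on with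
    | zero => simp
    | add a b ha hb => simp [map_add, ha, hb]
    | tmul t f =>
      rw [pairT_tmul, pairT_tmul, mul_comm s t]
      congr 2
      simp only [LeibnizAlg.spZ, LeibnizAlg.sp]
      exact Subtype.ext (add_comm _ _)

lemma pairT_smul_right (A : LeibnizAlg 𝕜 L) (S : Type w) [CommRing S] [Algebra 𝕜 S]
    (ι : A.leftCenter →ₗ[𝕜] S) (x : S ⊗[𝕜] L) (t : S) (f : L) :
    pairT A S ι x (t ⊗ₜ[𝕜] f) = t * pairT A S ι x ((1 : S) ⊗ₜ[𝕜] f) := by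
  induction x using TensorProduct.induction_on with
  | zero => simp
  | add a b ha hb => simp [map_add, LinearMap.add_apply, ha, hb, mul_add]
  | tmul s e => rw [pairT_tmul, pairT_tmul]; ring

lemma pairT_ext_left (A : LeibnizAlg 𝕜 L) (S : Type w) [CommRing S] [Algebra 𝕜 S]
    (ι : A.leftCenter →ₗ[𝕜] S) (x x' : S ⊗[𝕜] L)
    (h : ∀ e : L, pairT A S ι x ((1 : S) ⊗ₜ[𝕜] e) = pairT A S ι x' ((1 : S) ⊗ₜ[𝕜] e))
    (y : S ⊗[𝕜] L) : pairT A S ι x y = pairT A S ι x' y := by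
  induction y using TensorProduct.induction_on with
  | zero => simp
  | add a b ha hb => simp [map_add, ha, hb]
  | tmul t f => rw [pairT_smul_right A S ι x t f, pairT_smul_right A S ι x' t f, h]

theorem pair_welldef (A : LeibnizAlg 𝕜 L) (S : Type w) [CommRing S] [Algebra 𝕜 S]
    (ι : A.leftCenter →ₗ[𝕜] S) (hS : IsSymAlg S ι) :
    (∀ x x' y y' : S ⊗[𝕜] L,
      (∀ e : L, pairT A S ι x ((1 : S) ⊗ₜ[𝕜] e) = pairT A S ι x' ((1 : S) ⊗ₜ[𝕜] e)) →
      (∀ e : L, pairT A S ι y ((1 : S) ⊗ₜ[𝕜] e) = pairT A S ι y' ((1 : S) ⊗ₜ[𝕜] e)) →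
      pairT A S ι x y = pairT A S ι x' y') ∧
    (∀ (n m : ℕ) (ω η : ℕ → List L → List A.leftCenter → S)
      (ωt ωt' ηt ηt' : ℕ → List L → List A.leftCenter → S ⊗[𝕜] L),
      IsPre A S ι n ω ωt → IsPre A S ι n ω ωt' →
      IsPre A S ι m η ηt → IsPre A S ι m η ηt' →
      ∀ (k : ℕ) (es : List L) (fs : List A.leftCenter),
        2*k + (es.length + 2) = n + m → fs.length = k →
        cbull A S ι n m ωt ηt k es fs = cbull A S ι n m ωt' ηt' k es fs) := by
  have key : ∀ x x' y y' : S ⊗[𝕜] L,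
      (∀ e : L, pairT A S ι x ((1 : S) ⊗ₜ[𝕜] e) = pairT A S ι x' ((1 : S) ⊗ₜ[𝕜] e)) →
      (∀ e : L, pairT A S ι y ((1 : S) ⊗ₜ[𝕜] e) = pairT A S ι y' ((1 : S) ⊗ₜ[𝕜] e)) →
      pairT A S ι x y = pairT A S ι x' y' := by
    intro x x' y y' hx hy
    rw [pairT_ext_left A S ι x x' hx y, pairT_symm,
      pairT_ext_left A S ι y y' hy x', pairT_symm]
  refine ⟨key, ?_⟩
  intro n m ω η ωt ωt' ηt ηt' hω hω' hη hη' k es fs hn hk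
  unfold cbull
  congr 1
  apply Finset.sum_congr rfl
  intro i hi
  have hi' : i ≤ k := Nat.lt_succ_iff.mp (Finset.mem_range.mp hi)
  by_cases hc : 2*i + 1 ≤ n ∧ 2*(k-i) + 1 ≤ m
  · rw [if_pos hc, if_pos hc]
    apply shSum_congr
    intro es₁ es₂ h₁ h₂
    apply shSumU_congr
    intro fs₁ fs₂ g₁ g₂
    have he₁ : 2*i + (es₁.length + 1) = n := by omega
    have he₂ : 2*(k-i) + (es₂.length + 1) = m := by omega
    have hf₁ : fs₁.length = i := g₁
    have hf₂ : fs₂.length = k - i := by omega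
    exact key _ _ _ _
      (fun e => (hω i es₁ fs₁ he₁ hf₁ e).trans (hω' i es₁ fs₁ he₁ hf₁ e).symm)
      (fun e => (hη (k-i) es₂ fs₂ he₂ hf₂ e).trans (hη' (k-i) es₂ fs₂ he₂ hf₂ e).symm)
  · rw [if_neg hc, if_neg hc]

end Theorems
end

section
/- Let L be a Leibniz algebra over a field 𝕜 with left center Z, and let ω ∈ C̃^n(L), η ∈ C̃^m(L) be representable cochains. Then {ω,η} ∈ C^{n+m−2}(L) is again a representable cochain: for every k and all e₁,…,e_{n+m−3−2k} ∈ L, f₁,…,f_k ∈ Z, the map e ↦ {ω,η}_k(e₁,…,e_{n+m−3−2k},e; f₁,…,f_k) lies in the image of φ. -/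
open scoped TensorProduct

universe u v w

section ListAux

variable {α : Type*} {M : Type*} [AddCommMonoid M]

/-- Sum of a function over all signed splits of a list. -/
def sumSplits (l : List α) (H : ℤ × List α × List α → M) : M :=
  ((shSplits l).map H).sum

lemma list_sum_map_add {β : Type*} (l : List β) (f g : β → M) :
    (l.map fun x => f x + g x).sum = (l.map f).sum + (l.map g).sum := by
  induction l with
  | nil => simp
  | cons a l ih =>
    simp only [List.map_cons, List.sum_cons, ih]
    abel

lemma sumSplits_cons (a : α) (l : List α) (H : ℤ × List α × List α → M) :
    sumSplits (a :: l) H =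
      sumSplits l (fun t => H (t.1, a :: t.2.1, t.2.2)) +
      sumSplits l (fun t => H ((-1) ^ t.2.1.length * t.1, t.2.1, a :: t.2.2)) := by
  simp [sumSplits, shSplits, List.map_map, Function.comp_def]

lemma sumSplits_congr {l : List α} {H H' : ℤ × List α × List α → M}
    (h : ∀ t ∈ shSplits l, H t = H' t) : sumSplits l H = sumSplits l H' :=
  congrArg List.sum (List.map_congr_left h)

lemma sumSplits_add (l : List α) (H H' : ℤ × List α × List α → M) :
    sumSplits l (fun t => H t + H' t) = sumSplits l H + sumSplits l H' :=
  list_sum_map_add _ _ _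

lemma sumSplits_zero (l : List α) : sumSplits l (fun _ => (0 : M)) = 0 := by
  simp [sumSplits]

lemma length_of_mem_shSplits : ∀ {l : List α} {t : ℤ × List α × List α},
    t ∈ shSplits l → t.2.1.length + t.2.2.length = l.length := by
  intro l
  induction l with
  | nil => intro t ht; simp [shSplits] at ht; subst ht; simp
  | cons a l ih =>
    intro t ht
    simp only [shSplits, List.mem_append, List.mem_map] at ht
    rcases ht with ⟨u, hu, rfl⟩ | ⟨u, hu, rfl⟩ <;> have := ih hu <;> simp_all <;> omega

lemma trip_ext {s s' : ℤ} {x x' y y' : List α} (h : s = s') (hx : x = x') (hy : y = y') :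
    ((s, x, y) : ℤ × List α × List α) = (s', x', y') := by subst h hx hy; rfl

lemma neg_one_pow_par {p q : ℕ} (h : p % 2 = q % 2) : ((-1 : ℤ)) ^ p = (-1) ^ q := by
  rcases Nat.even_or_odd p with hp | hp
  · have hp2 := Nat.even_iff.mp hp
    rw [hp.neg_one_pow, (Nat.even_iff.mpr (by omega)).neg_one_pow]
  · have hp2 := Nat.odd_iff.mp hp
    rw [hp.neg_one_pow, (Nat.odd_iff.mpr (by omega)).neg_one_pow]

lemma sign_helper1 (p q : ℕ) (s : ℤ) :
    (-1 : ℤ) ^ (p * (q + 1)) * ((-1) ^ p * s) = (-1) ^ (p * q) * s := by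
  have h : p * (q + 1) + p = p * q + 2 * p := by ring
  rw [← mul_assoc, ← pow_add, h, pow_add, pow_mul]
  norm_num

lemma sign_helper2 (p q : ℕ) (s : ℤ) :
    (-1 : ℤ) ^ q * ((-1) ^ (p * q) * s) = (-1) ^ ((p + 1) * q) * s := by
  have h : q + p * q = (p + 1) * q := by ring
  rw [← mul_assoc, ← pow_add, h]

lemma sumSplits_append_singleton (l : List α) (e : α) :
    ∀ H : ℤ × List α × List α → M,
    sumSplits (l ++ [e]) H = sumSplits l (fun t =>
      H ((-1) ^ t.2.2.length * t.1, t.2.1 ++ [e], t.2.2) + H (t.1, t.2.1, t.2.2 ++ [e])) := by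
  induction l with
  | nil => intro H; simp [sumSplits, shSplits]
  | cons a l ih =>
    intro H
    rw [List.cons_append, sumSplits_cons, ih, ih, sumSplits_cons]
    congr 1 <;>
    · apply sumSplits_congr
      intro t _
      refine congrArg₂ (· + ·)
        (congrArg H (trip_ext ?_ (by simp) (by simp)))
        (congrArg H (trip_ext ?_ (by simp) (by simp)))
      all_goals try dsimp only
      all_goals try simp only [List.length_append, List.length_cons, List.length_nil]
      all_goals try ring

lemma sumSplits_swap (l : List α) :
    ∀ H : ℤ × List α × List α → M,
    sumSplits l H = sumSplits l (fun t =>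
      H ((-1) ^ (t.2.1.length * t.2.2.length) * t.1, t.2.2, t.2.1)) := by
  induction l with
  | nil => intro H; simp [sumSplits, shSplits]
  | cons a l ih =>
    intro H
    rw [sumSplits_cons, ih (fun t => H (t.1, a :: t.2.1, t.2.2)),
      ih (fun t => H ((-1) ^ t.2.1.length * t.1, t.2.1, a :: t.2.2)), add_comm,
      sumSplits_cons]
    congr 1
    · apply sumSplits_congr
      intro t _
      refine congrArg H (trip_ext ?_ (by simp) (by simp))
      dsimp only
      exact sign_helper2 t.2.1.length t.2.2.length t.1
    · apply sumSplits_congr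
      intro t _
      refine congrArg H (trip_ext ?_ (by simp) (by simp))
      dsimp only
      exact (sign_helper1 t.2.1.length t.2.2.length t.1).symm

lemma list_sum_map_filter {β : Type*} (l : List β) (q : β → Bool) (f : β → M) :
    ((l.filter q).map f).sum = (l.map fun x => if q x then f x else 0).sum := by
  induction l with
  | nil => simp
  | cons a l ih => by_cases h : q a <;> simp [List.filter_cons, h, ih]

lemma shSumU_eq (p : ℕ) (l : List α) (F : List α → List α → M) :
    shSumU p l F = sumSplits l
      (fun t => if t.2.1.length = p then F t.2.1 t.2.2 else 0) := by
  unfold shSumU sumSplits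
  rw [list_sum_map_filter]
  refine congrArg List.sum (List.map_congr_left fun t _ => ?_)
  simp [beq_iff_eq]

lemma shSumU_swap (p q : ℕ) (l : List α) (F : List α → List α → M)
    (h : p + q = l.length) :
    shSumU p l F = shSumU q l (fun x y => F y x) := by
  rw [shSumU_eq, shSumU_eq, sumSplits_swap]
  apply sumSplits_congr
  intro t ht
  have hlen := length_of_mem_shSplits ht
  dsimp only
  exact if_congr (by constructor <;> intro <;> omega) rfl rfl

lemma shSumU_add (p : ℕ) (l : List α) (F F' : List α → List α → M) :
    shSumU p l (fun x y => F x y + F' x y) = shSumU p l F + shSumU p l F' := by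
  rw [shSumU_eq, shSumU_eq, shSumU_eq, ← sumSplits_add]
  apply sumSplits_congr
  intro t _
  by_cases h : t.2.1.length = p <;> simp [h]

variable {G : Type*} [AddCommGroup G]

lemma sumSplits_smul (z : ℤ) (l : List α) (H : ℤ × List α × List α → G) :
    z • sumSplits l H = sumSplits l (fun t => z • H t) := by
  unfold sumSplits
  rw [List.smul_sum, List.map_map]
  rfl

lemma shSum_eq (p : ℕ) (l : List α) (F : List α → List α → G) :
    shSum p l F = sumSplits l
      (fun t => if t.2.1.length = p then t.1 • F t.2.1 t.2.2 else 0) := by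
  unfold shSum sumSplits
  rw [list_sum_map_filter]
  refine congrArg List.sum (List.map_congr_left fun t _ => ?_)
  simp [beq_iff_eq]

lemma expand_shSum (z : ℤ) (Gd : Prop) [Decidable Gd] (p : ℕ) (l : List α) (e : α)
    (F : List α → List α → G) :
    (z • if Gd then shSum p (l ++ [e]) F else 0) =
    sumSplits l (fun t =>
      (if Gd ∧ t.2.1.length + 1 = p then
        (z * ((-1) ^ t.2.2.length * t.1)) • F (t.2.1 ++ [e]) t.2.2 else 0) +
      (if Gd ∧ t.2.1.length = p then (z * t.1) • F t.2.1 (t.2.2 ++ [e]) else 0)) := by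
  by_cases hG : Gd
  · simp only [hG, if_true, true_and]
    rw [shSum_eq, sumSplits_smul, sumSplits_append_singleton]
    apply sumSplits_congr
    intro t _
    dsimp only
    simp only [List.length_append, List.length_cons, List.length_nil, smul_add, smul_ite,
      smul_zero, smul_smul]
  · simp only [hG, if_false, false_and, smul_zero]
    rw [show (fun t : ℤ × List α × List α =>
      (0 : G) + (0 : G)) = (fun _ => (0:G)) from by funext; simp, sumSplits_zero]

lemma expand_shSum_swap (z : ℤ) (Gd : Prop) [Decidable Gd] (p : ℕ) (l : List α) (e : α)
    (F : List α → List α → G) :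
    (z • if Gd then shSum p (l ++ [e]) F else 0) =
    sumSplits l (fun t =>
      (if Gd ∧ t.2.2.length + 1 = p then
        (z * ((-1) ^ t.2.1.length * ((-1) ^ (t.2.1.length * t.2.2.length) * t.1))) •
          F (t.2.2 ++ [e]) t.2.1 else 0) +
      (if Gd ∧ t.2.2.length = p then
        (z * ((-1) ^ (t.2.1.length * t.2.2.length) * t.1)) • F t.2.2 (t.2.1 ++ [e]) else 0)) := by
  rw [expand_shSum z Gd p l e F, sumSplits_swap]

end ListAux

section RepAux

variable {𝕜 : Type u} [Field 𝕜] {L : Type v} [AddCommGroup L] [Module 𝕜 L]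
variable (A : LeibnizAlg 𝕜 L)
variable (S : Type w) [CommRing S] [Algebra 𝕜 S]
variable (ι : A.leftCenter →ₗ[𝕜] S)

lemma spZ_comm (x y : L) : A.spZ x y = A.spZ y x :=
  Subtype.ext (by simp [LeibnizAlg.spZ, LeibnizAlg.sp, add_comm])

lemma pairT_tmul_s15 (a b : S) (x y : L) :
    pairT A S ι (a ⊗ₜ[𝕜] x) (b ⊗ₜ[𝕜] y) = a * b * ι (A.spZ x y) := by
  simp [pairT, spS, LeibnizAlg.spL, TensorProduct.tensorTensorTensorComm_tmul,
    TensorProduct.lift.tmul]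

lemma pairT_comm (x y : S ⊗[𝕜] L) : pairT A S ι x y = pairT A S ι y x := by
  induction x using TensorProduct.induction_on with
  | zero => simp
  | tmul a u =>
    induction y using TensorProduct.induction_on with
    | zero => simp
    | tmul b v => rw [pairT_tmul_s15, pairT_tmul_s15, spZ_comm]; ring
    | add y₁ y₂ h₁ h₂ => simp only [map_add, LinearMap.add_apply, h₁, h₂]
  | add x₁ x₂ h₁ h₂ => simp only [map_add, LinearMap.add_apply, h₁, h₂]

lemma pairT_tmul_left (a : S) (u : L) (y : S ⊗[𝕜] L) :
    pairT A S ι (a ⊗ₜ[𝕜] u) y = a * pairT A S ι y ((1 : S) ⊗ₜ[𝕜] u) := by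
  induction y using TensorProduct.induction_on with
  | zero => simp
  | tmul b v =>
    rw [pairT_tmul_s15, pairT_comm, pairT_tmul_s15]
    ring
  | add y₁ y₂ h₁ h₂ =>
    simp only [map_add, LinearMap.add_apply, h₁, h₂]
    ring

lemma pairT_smulS (s : S) (x y : S ⊗[𝕜] L) :
    pairT A S ι (s • x) y = s * pairT A S ι x y := by
  induction x using TensorProduct.induction_on with
  | zero => simp
  | tmul a u =>
    rw [TensorProduct.smul_tmul', smul_eq_mul, pairT_tmul_left, pairT_tmul_left]
    ring
  | add x₁ x₂ h₁ h₂ =>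
    rw [smul_add]
    simp only [map_add, LinearMap.add_apply, h₁, h₂]
    ring

/-- A function `L → S` is representable if it is of the form `φ(x)` for some
`x : S ⊗ L`. -/
def RepF (g : L → S) : Prop :=
  ∃ x : S ⊗[𝕜] L, ∀ e : L, pairT A S ι x ((1 : S) ⊗ₜ[𝕜] e) = g e

namespace RepF

variable {A S ι}

lemma congr' {g g' : L → S} (h : RepF A S ι g) (h' : ∀ e, g e = g' e) : RepF A S ι g' := by
  obtain ⟨x, hx⟩ := h
  exact ⟨x, fun e => (hx e).trans (h' e)⟩

lemma zero : RepF A S ι (fun _ => 0) := ⟨0, by simp⟩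

lemma add {g g' : L → S} (h : RepF A S ι g) (h' : RepF A S ι g') :
    RepF A S ι (fun e => g e + g' e) := by
  obtain ⟨x, hx⟩ := h
  obtain ⟨y, hy⟩ := h'
  exact ⟨x + y, fun e => by rw [map_add, LinearMap.add_apply, hx, hy]⟩

lemma zsmul (z : ℤ) {g : L → S} (h : RepF A S ι g) : RepF A S ι (fun e => z • g e) := by
  obtain ⟨x, hx⟩ := h
  refine ⟨z • x, fun e => ?_⟩
  rw [map_zsmul, LinearMap.smul_apply, hx]

lemma smulS (s : S) {g : L → S} (h : RepF A S ι g) : RepF A S ι (fun e => s * g e) := by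
  obtain ⟨x, hx⟩ := h
  exact ⟨s • x, fun e => by rw [pairT_smulS, hx]⟩

lemma listSum {β : Type*} (l : List β) (F : β → L → S) (h : ∀ t ∈ l, RepF A S ι (F t)) :
    RepF A S ι (fun e => (l.map (fun t => F t e)).sum) := by
  induction l with
  | nil => exact zero.congr' (by simp)
  | cons a l ih =>
    have := (h a (by simp)).add (ih fun t ht => h t (by simp [ht]))
    exact this.congr' (by simp)

lemma finsetSum (N : ℕ) (F : ℕ → L → S) (h : ∀ i ∈ Finset.range N, RepF A S ι (F i)) :
    RepF A S ι (fun e => ∑ i ∈ Finset.range N, F i e) := by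
  induction N with
  | zero => exact zero.congr' (by simp)
  | succ N ih =>
    have := (ih fun i hi => h i (by simp at hi ⊢; omega)).add
      (h N (by simp))
    exact this.congr' (fun e => (Finset.sum_range_succ _ _).symm)

lemma sumSplits' {β : Type*} (l : List β) (F : ℤ × List β × List β → L → S)
    (h : ∀ t ∈ shSplits l, RepF A S ι (F t)) :
    RepF A S ι (fun e => sumSplits l (fun t => F t e)) :=
  listSum (shSplits l) F h

lemma shSumU' (p : ℕ) {β : Type*} (l : List β) (F : List β → List β → L → S)
    (h : ∀ x y : List β, x.length = p → x.length + y.length = l.length →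
      RepF A S ι (F x y)) :
    RepF A S ι (fun e => shSumU p l (fun x y => F x y e)) := by
  unfold shSumU
  apply listSum
  intro t ht
  rw [List.mem_filter] at ht
  exact h t.2.1 t.2.2 (by simpa using ht.2) (length_of_mem_shSplits ht.1)

end RepF

variable {A S ι}

lemma IsExt.zero' {n : ℕ} {ω : ℕ → List L → List A.leftCenter → S}
    {ωc : ℕ → List L → S → List A.leftCenter → S} (hωc : IsExt A S ι n ω ωc)
    {k : ℕ} {es : List L} {fs : List A.leftCenter}
    (hk : 2 * (k + 1) + es.length = n) (hf : fs.length = k) : ωc k es 0 fs = 0 := by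
  have := hωc.map_smul k es fs 0 0 hk hf
  simpa using this

lemma IsExt.one' {n : ℕ} {ω : ℕ → List L → List A.leftCenter → S}
    {ωc : ℕ → List L → S → List A.leftCenter → S} (hωc : IsExt A S ι n ω ωc)
    {k : ℕ} {es : List L} {fs : List A.leftCenter}
    (hk : 2 * (k + 1) + es.length = n) (hf : fs.length = k) : ωc k es 1 fs = 0 := by
  have := hωc.mul_rule k es fs 1 1 hk hf
  simp only [mul_one, one_mul] at this
  have h2 : ωc k es 1 fs + ωc k es 1 fs = ωc k es 1 fs + 0 := by
    rw [add_zero, ← this]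
  exact (add_left_cancel h2)

lemma IsExt.algebraMap' {n : ℕ} {ω : ℕ → List L → List A.leftCenter → S}
    {ωc : ℕ → List L → S → List A.leftCenter → S} (hωc : IsExt A S ι n ω ωc)
    {k : ℕ} {es : List L} {fs : List A.leftCenter}
    (hk : 2 * (k + 1) + es.length = n) (hf : fs.length = k) (c : 𝕜) :
    ωc k es (algebraMap 𝕜 S c) fs = 0 := by
  rw [Algebra.algebraMap_eq_smul_one, hωc.map_smul k es fs c 1 hk hf,
    hωc.one' hk hf, smul_zero]

end RepAux

section AlgAux

/-- The "down" algebra homomorphism for `ULift`. -/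
def downAlg (R : Type*) (B : Type*) [CommSemiring R] [Semiring B] [Algebra R B] :
    ULift B →ₐ[R] B :=
  { (ULift.ringEquiv : ULift B ≃+* B).toRingHom with
    commutes' := fun _ => rfl }

/-- The "up" algebra homomorphism for `ULift`. -/
def upAlg (R : Type*) (B : Type*) [CommSemiring R] [Semiring B] [Algebra R B] :
    B →ₐ[R] ULift B :=
  { ((ULift.ringEquiv : ULift B ≃+* B).symm : B ≃+* ULift B).toRingHom with
    commutes' := fun _ => rfl }

end AlgAux

section MainAux

variable {𝕜 : Type u} [Field 𝕜] {L : Type v} [AddCommGroup L] [Module 𝕜 L]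
variable {A : LeibnizAlg 𝕜 L}
variable {S : Type w} [CommRing S] [Algebra 𝕜 S]
variable {ι : A.leftCenter →ₗ[𝕜] S}

lemma isSymAlg_adjoin_top (hS : IsSymAlg S ι) : Algebra.adjoin 𝕜 (Set.range ι) = ⊤ := by
  classical
  set A₀ := Algebra.adjoin 𝕜 (Set.range ι) with hA₀
  have hmem : ∀ z, ι z ∈ A₀ := fun z => Algebra.subset_adjoin ⟨z, rfl⟩
  let j : A.leftCenter →ₗ[𝕜] A₀ :=
    { toFun := fun z => ⟨ι z, hmem z⟩
      map_add' := fun a b => Subtype.ext (by simp)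
      map_smul' := fun c a => Subtype.ext (by simp) }
  obtain ⟨h, hh, -⟩ := hS (ULift.{max u v} A₀)
    ((ULift.moduleEquiv.symm.toLinearMap : A₀ →ₗ[𝕜] ULift.{max u v} A₀) ∘ₗ j)
  let H : S →ₐ[𝕜] S := (A₀.val.comp (downAlg 𝕜 A₀)).comp h
  have hH : ∀ z, H (ι z) = ι z := by
    intro z
    show A₀.val (downAlg 𝕜 A₀ (h (ι z))) = ι z
    rw [hh z]
    rfl
  obtain ⟨h₂, -, hu⟩ := hS (ULift.{max u v} S)
    ((ULift.moduleEquiv.symm.toLinearMap : S →ₗ[𝕜] ULift.{max u v} S) ∘ₗ ι)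
  have e1 := hu ((upAlg 𝕜 S).comp H) (fun z => by
    show upAlg 𝕜 S (H (ι z)) = _
    rw [hH z]
    rfl)
  have e2 := hu (upAlg 𝕜 S) (fun z => rfl)
  have hid : ∀ s : S, H s = s := by
    intro s
    have h3 := congrArg (fun f : S →ₐ[𝕜] ULift.{max u v} S => f s) (e1.trans e2.symm)
    exact congrArg ULift.down h3
  rw [eq_top_iff]
  intro s _
  have hs : H s ∈ A₀ := by
    show A₀.val (downAlg 𝕜 A₀ (h s)) ∈ A₀
    exact SetLike.coe_mem _
  rwa [hid s] at hs

variable {n : ℕ} {ω : ℕ → List L → List A.leftCenter → S}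
variable {ωt : ℕ → List L → List A.leftCenter → S ⊗[𝕜] L}
variable {ωc : ℕ → List L → S → List A.leftCenter → S}

/-- Key lemma for the terms where the distinguished element lands inside the
extended cochain `ω̌` (good terms of type (C)). -/
lemma repr_ext (hωt : IsPre A S ι n ω ωt) (hωc : IsExt A S ι n ω ωc)
    (hadj : Algebra.adjoin 𝕜 (Set.range ι) = ⊤)
    (i : ℕ) (l : List L) (F : List A.leftCenter)
    (hl : 2 * (i + 1) + (l.length + 1) = n) (hF : F.length = i) (x : S) :
    RepF A S ι (fun e => ωc i (l ++ [e]) x F) := by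
  have hx : x ∈ Algebra.adjoin 𝕜 (Set.range ι) := by rw [hadj]; trivial
  induction hx using Algebra.adjoin_induction with
  | mem z hz =>
    obtain ⟨f, rfl⟩ := hz
    refine ⟨ωt (i + 1) l (f :: F), fun e => ?_⟩
    dsimp only
    rw [hωt (i + 1) l (f :: F) (by omega) (by simp [hF]) e,
      hωc.on_gen i (l ++ [e]) F f
        (by simp only [List.length_append, List.length_cons, List.length_nil]; omega) hF]
  | algebraMap r =>
    exact RepF.zero.congr' (fun e => (hωc.algebraMap'
      (by simp only [List.length_append, List.length_cons, List.length_nil]; omega) hF r).symm)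
  | add x y hx hy ihx ihy =>
    exact (ihx.add ihy).congr' (fun e => (hωc.map_add i (l ++ [e]) F x y
      (by simp only [List.length_append, List.length_cons, List.length_nil]; omega) hF).symm)
  | mul x y hx hy ihx ihy =>
    obtain ⟨X, hX⟩ := ihx
    obtain ⟨Y, hY⟩ := ihy
    refine ⟨x • Y + y • X, fun e => ?_⟩
    dsimp only
    have hX' : ∀ e : L, pairT A S ι X ((1 : S) ⊗ₜ[𝕜] e) = ωc i (l ++ [e]) x F := hX
    have hY' : ∀ e : L, pairT A S ι Y ((1 : S) ⊗ₜ[𝕜] e) = ωc i (l ++ [e]) y F := hY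
    rw [map_add, LinearMap.add_apply, pairT_smulS, pairT_smulS, hX' e, hY' e,
      hωc.mul_rule i (l ++ [e]) F x y
        (by simp only [List.length_append, List.length_cons, List.length_nil]; omega) hF]

/-- Key cancellation lemma: the pairing term and the diamond term combine into a
representable function. -/
lemma rep_pair (hω : IsCochain A S n ω) (hωt : IsPre A S ι n ω ωt)
    (hωc : IsExt A S ι n ω ωc)
    (i : ℕ) (l : List L) (F : List A.leftCenter)
    (hl : 2 * i + (l.length + 2) = n) (hF : F.length = i) (Y : S ⊗[𝕜] L) :
    RepF A S ι (fun e => pairT A S ι Y (ωt i (l ++ [e]) F)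
      + ωc i l (pairT A S ι Y ((1 : S) ⊗ₜ[𝕜] e)) F) := by
  induction Y using TensorProduct.induction_on with
  | zero =>
    refine RepF.zero.congr' (fun e => Eq.symm ?_)
    simp only [map_zero, LinearMap.zero_apply]
    rw [hωc.zero' (by omega) hF, add_zero]
  | tmul t v =>
    refine ⟨(-t) • ωt i (l ++ [v]) F + (ωc i l t F) ⊗ₜ[𝕜] v, fun e => ?_⟩
    dsimp only
    have h1 : pairT A S ι (t ⊗ₜ[𝕜] v) (ωt i (l ++ [e]) F) = t * ω i (l ++ e :: v :: []) F := by
      rw [pairT_tmul_left, hωt i (l ++ [e]) F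
        (by simp only [List.length_append, List.length_cons, List.length_nil]; omega) hF v,
        show (l ++ [e]) ++ [v] = l ++ e :: v :: [] by simp]
    have hsk := hω.skew i l [] e v F (by simpa using hl) hF
    rw [List.append_nil, spZ_comm A e v] at hsk
    have h3 : pairT A S ι (t ⊗ₜ[𝕜] v) ((1 : S) ⊗ₜ[𝕜] e) = t * ι (A.spZ v e) := by
      rw [pairT_tmul_s15]; ring
    rw [map_add, LinearMap.add_apply, pairT_smulS, pairT_tmul_s15, h1, h3,
      hωc.mul_rule i l F t (ι (A.spZ v e)) (by omega) hF,
      hωc.on_gen i l F (A.spZ v e) (by omega) hF,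
      hωt i (l ++ [v]) F
        (by simp only [List.length_append, List.length_cons, List.length_nil]; omega) hF e,
      show (l ++ [v]) ++ [e] = l ++ v :: e :: [] by simp]
    linear_combination (-t) * hsk
  | add Y₁ Y₂ ih₁ ih₂ =>
    refine (ih₁.add ih₂).congr' (fun e => ?_)
    simp only [map_add, LinearMap.add_apply]
    rw [hωc.map_add i l F (pairT A S ι Y₁ ((1 : S) ⊗ₜ[𝕜] e))
      (pairT A S ι Y₂ ((1 : S) ⊗ₜ[𝕜] e)) (by omega) hF]
    ring

end MainAux

section Theorems

variable {𝕜 : Type u} [Field 𝕜] {L : Type v} [AddCommGroup L] [Module 𝕜 L]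

theorem cpbr_repr (A : LeibnizAlg 𝕜 L) (S : Type w) [CommRing S] [Algebra 𝕜 S]
    (ι : A.leftCenter →ₗ[𝕜] S) (hS : IsSymAlg S ι)
    (n m : ℕ) (ω η : ℕ → List L → List A.leftCenter → S)
    (hω : IsCochain A S n ω) (hη : IsCochain A S m η)
    (ωt ηt : ℕ → List L → List A.leftCenter → S ⊗[𝕜] L)
    (hωt : IsPre A S ι n ω ωt) (hηt : IsPre A S ι m η ηt)
    (ωc ηc : ℕ → List L → S → List A.leftCenter → S)
    (hωc : IsExt A S ι n ω ωc) (hηc : IsExt A S ι m η ηc) :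
    IsRepr A S ι (n+m-2) (cpbr A S ι n m ω η ωt ηt ωc ηc) := by
  classical
  have hadj : Algebra.adjoin 𝕜 (Set.range ι) = ⊤ := isSymAlg_adjoin_top hS
  intro k es fs hlen hfs
  suffices h : RepF A S ι
      (fun e => cpbr A S ι n m ω η ωt ηt ωc ηc k (es ++ [e]) fs) from h
  have hsum : ∀ e : L, cpbr A S ι n m ω η ωt ηt ωc ηc k (es ++ [e]) fs
      = ∑ i ∈ Finset.range (k + 1),
        (((-1 : ℤ) ^ (m - 1) • if 2 * i + 1 ≤ n ∧ 2 * (k - i) + 1 ≤ m then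
            shSum (n - 2 * i - 1) (es ++ [e]) (fun x y =>
              shSumU i fs (fun f₁ f₂ => pairT A S ι (ωt i x f₁) (ηt (k - i) y f₂))) else 0)
          + (((1 : ℤ) • if 2 * (i + 1) ≤ n ∧ 2 * (k - i) ≤ m then
            shSum (n - 2 * i - 2) (es ++ [e]) (fun x y =>
              shSumU (k - i) fs (fun f₁ f₂ => ωc i x (η (k - i) y f₁) f₂)) else 0)
          + ((-(-1 : ℤ) ^ (n * m)) • if 2 * ((k - i) + 1) ≤ m ∧ 2 * (k - (k - i)) ≤ n then
            shSum (m - 2 * (k - i) - 2) (es ++ [e]) (fun x y =>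
              shSumU (k - (k - i)) fs
                (fun f₁ f₂ => ηc (k - i) x (ω (k - (k - i)) y f₁) f₂)) else 0))) := by
    intro e
    unfold cpbr cbull cdiam
    rw [Finset.smul_sum, Finset.smul_sum, sub_eq_add_neg, add_assoc, ← Finset.sum_neg_distrib,
      ← Finset.sum_range_reflect (fun i' => -((-1 : ℤ) ^ (n * m) •
        if 2 * (i' + 1) ≤ m ∧ 2 * (k - i') ≤ n then
          shSum (m - 2 * i' - 2) (es ++ [e]) (fun x y =>
            shSumU (k - i') fs (fun f₁ f₂ => ηc i' x (ω (k - i') y f₁) f₂)) else 0)) (k + 1),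
      ← Finset.sum_add_distrib, ← Finset.sum_add_distrib]
    refine Finset.sum_congr rfl (fun i _ => ?_)
    simp only [Nat.add_sub_cancel]
    rw [one_smul, neg_smul]
  refine RepF.congr' (RepF.finsetSum (k + 1) _ ?_) (fun e => (hsum e).symm)
  intro i hi
  have hik : i ≤ k := by simp only [Finset.mem_range] at hi; omega
  have hii : k - (k - i) = i := Nat.sub_sub_self hik
  simp only [hii]
  have hexp : ∀ e : L,
      (((-1 : ℤ) ^ (m - 1) • if 2 * i + 1 ≤ n ∧ 2 * (k - i) + 1 ≤ m then
          shSum (n - 2 * i - 1) (es ++ [e]) (fun x y =>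
            shSumU i fs (fun f₁ f₂ => pairT A S ι (ωt i x f₁) (ηt (k - i) y f₂))) else 0)
        + (((1 : ℤ) • if 2 * (i + 1) ≤ n ∧ 2 * (k - i) ≤ m then
          shSum (n - 2 * i - 2) (es ++ [e]) (fun x y =>
            shSumU (k - i) fs (fun f₁ f₂ => ωc i x (η (k - i) y f₁) f₂)) else 0)
        + ((-(-1 : ℤ) ^ (n * m)) • if 2 * ((k - i) + 1) ≤ m ∧ 2 * i ≤ n then
          shSum (m - 2 * (k - i) - 2) (es ++ [e]) (fun x y =>
            shSumU i fs (fun f₁ f₂ => ηc (k - i) x (ω i y f₁) f₂)) else 0)))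
      = sumSplits es (fun t =>
          ((if (2 * i + 1 ≤ n ∧ 2 * (k - i) + 1 ≤ m) ∧ t.2.1.length + 1 = n - 2 * i - 1 then
              ((-1 : ℤ) ^ (m - 1) * ((-1) ^ t.2.2.length * t.1)) •
                shSumU i fs (fun f₁ f₂ =>
                  pairT A S ι (ωt i (t.2.1 ++ [e]) f₁) (ηt (k - i) t.2.2 f₂)) else 0)
            + (if (2 * i + 1 ≤ n ∧ 2 * (k - i) + 1 ≤ m) ∧ t.2.1.length = n - 2 * i - 1 then
              ((-1 : ℤ) ^ (m - 1) * t.1) •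
                shSumU i fs (fun f₁ f₂ =>
                  pairT A S ι (ωt i t.2.1 f₁) (ηt (k - i) (t.2.2 ++ [e]) f₂)) else 0))
          + (((if (2 * (i + 1) ≤ n ∧ 2 * (k - i) ≤ m) ∧ t.2.1.length + 1 = n - 2 * i - 2 then
              ((1 : ℤ) * ((-1) ^ t.2.2.length * t.1)) •
                shSumU (k - i) fs (fun f₁ f₂ =>
                  ωc i (t.2.1 ++ [e]) (η (k - i) t.2.2 f₁) f₂) else 0)
            + (if (2 * (i + 1) ≤ n ∧ 2 * (k - i) ≤ m) ∧ t.2.1.length = n - 2 * i - 2 then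
              ((1 : ℤ) * t.1) •
                shSumU (k - i) fs (fun f₁ f₂ =>
                  ωc i t.2.1 (η (k - i) (t.2.2 ++ [e]) f₁) f₂) else 0))
          + ((if (2 * ((k - i) + 1) ≤ m ∧ 2 * i ≤ n) ∧ t.2.2.length + 1 = m - 2 * (k - i) - 2 then
              ((-(-1 : ℤ) ^ (n * m)) * ((-1) ^ t.2.1.length *
                ((-1) ^ (t.2.1.length * t.2.2.length) * t.1))) •
                shSumU i fs (fun f₁ f₂ =>
                  ηc (k - i) (t.2.2 ++ [e]) (ω i t.2.1 f₁) f₂) else 0)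
            + (if (2 * ((k - i) + 1) ≤ m ∧ 2 * i ≤ n) ∧ t.2.2.length = m - 2 * (k - i) - 2 then
              ((-(-1 : ℤ) ^ (n * m)) * ((-1) ^ (t.2.1.length * t.2.2.length) * t.1)) •
                shSumU i fs (fun f₁ f₂ =>
                  ηc (k - i) t.2.2 (ω i (t.2.1 ++ [e]) f₁) f₂) else 0)))) := by
    intro e
    rw [expand_shSum ((-1 : ℤ) ^ (m - 1)) _ (n - 2 * i - 1) es e _,
      expand_shSum (1 : ℤ) _ (n - 2 * i - 2) es e _,
      expand_shSum_swap (-(-1 : ℤ) ^ (n * m)) _ (m - 2 * (k - i) - 2) es e _,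
      ← sumSplits_add, ← sumSplits_add]
  refine RepF.congr' (RepF.sumSplits' es _ ?_) (fun e => (hexp e).symm)
  intro t ht
  obtain ⟨s, a, b⟩ := t
  have htl : a.length + b.length = es.length := length_of_mem_shSplits ht
  dsimp only at htl ⊢
  -- Group the six terms as (T1+T4) + ((T2+T6) + (T3+T5)).
  have R14 : RepF A S ι (fun e =>
      (if (2 * i + 1 ≤ n ∧ 2 * (k - i) + 1 ≤ m) ∧ a.length + 1 = n - 2 * i - 1 then
        ((-1 : ℤ) ^ (m - 1) * ((-1) ^ b.length * s)) •
          shSumU i fs (fun f₁ f₂ =>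
            pairT A S ι (ωt i (a ++ [e]) f₁) (ηt (k - i) b f₂)) else 0)
      + (if (2 * (i + 1) ≤ n ∧ 2 * (k - i) ≤ m) ∧ a.length = n - 2 * i - 2 then
        ((1 : ℤ) * s) •
          shSumU (k - i) fs (fun f₁ f₂ =>
            ωc i a (η (k - i) (b ++ [e]) f₁) f₂) else 0)) := by
    by_cases hc : (2 * (i + 1) ≤ n ∧ 2 * (k - i) ≤ m) ∧ a.length = n - 2 * i - 2
    · have hcond1 : (2 * i + 1 ≤ n ∧ 2 * (k - i) + 1 ≤ m) ∧ a.length + 1 = n - 2 * i - 1 := by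
        omega
      have hsc : ((-1 : ℤ) ^ (m - 1) * ((-1) ^ b.length * s)) = s := by
        rw [← mul_assoc, ← pow_add, neg_one_pow_par (q := 0) (by omega), pow_zero, one_mul]
      have core : RepF A S ι (fun e => shSumU i fs (fun f₁ f₂ =>
          pairT A S ι (ωt i (a ++ [e]) f₁) (ηt (k - i) b f₂)
          + ωc i a (η (k - i) (b ++ [e]) f₂) f₁)) := by
        refine RepF.shSumU' i fs (fun f₁ f₂ e =>
          pairT A S ι (ωt i (a ++ [e]) f₁) (ηt (k - i) b f₂)
          + ωc i a (η (k - i) (b ++ [e]) f₂) f₁) ?_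
        intro f₁ f₂ hf1 hf2
        rw [hfs] at hf2
        refine (rep_pair hω hωt hωc i a f₁ (by omega) hf1 (ηt (k - i) b f₂)).congr'
          (fun e => ?_)
        rw [pairT_comm, hηt (k - i) b f₂ (by omega) (by omega) e]
      refine core.zsmul s |>.congr' (fun e => ?_)
      rw [if_pos hcond1, if_pos hc, hsc, one_mul, shSumU_add, smul_add]
      congr 1
      rw [shSumU_swap (k - i) i fs _ (by omega)]
    · have h1 : ¬ ((2 * i + 1 ≤ n ∧ 2 * (k - i) + 1 ≤ m) ∧ a.length + 1 = n - 2 * i - 1) :=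
        fun h => hc (by omega)
      exact RepF.zero.congr' (fun e => by rw [if_neg h1, if_neg hc, add_zero])
  have R26 : RepF A S ι (fun e =>
      (if (2 * i + 1 ≤ n ∧ 2 * (k - i) + 1 ≤ m) ∧ a.length = n - 2 * i - 1 then
        ((-1 : ℤ) ^ (m - 1) * s) •
          shSumU i fs (fun f₁ f₂ =>
            pairT A S ι (ωt i a f₁) (ηt (k - i) (b ++ [e]) f₂)) else 0)
      + (if (2 * ((k - i) + 1) ≤ m ∧ 2 * i ≤ n) ∧ b.length = m - 2 * (k - i) - 2 then
        ((-(-1 : ℤ) ^ (n * m)) * ((-1) ^ (a.length * b.length) * s)) •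
          shSumU i fs (fun f₁ f₂ =>
            ηc (k - i) b (ω i (a ++ [e]) f₁) f₂) else 0)) := by
    by_cases hc : (2 * i + 1 ≤ n ∧ 2 * (k - i) + 2 ≤ m) ∧ a.length = n - 2 * i - 1
    · have hcond2 : (2 * i + 1 ≤ n ∧ 2 * (k - i) + 1 ≤ m) ∧ a.length = n - 2 * i - 1 := by omega
      have hcond6 : (2 * ((k - i) + 1) ≤ m ∧ 2 * i ≤ n) ∧ b.length = m - 2 * (k - i) - 2 := by
        omega
      have hsc : ((-(-1 : ℤ) ^ (n * m)) * ((-1) ^ (a.length * b.length) * s))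
          = (-1 : ℤ) ^ (m - 1) * s := by
        have hp : (-1 : ℤ) ^ (a.length * b.length) = (-1) ^ (n * m) * (-1) ^ m := by
          rw [neg_one_pow_par (q := (n + 1) * m) (by
            rw [Nat.mul_mod, show a.length % 2 = (n + 1) % 2 from by omega,
              show b.length % 2 = m % 2 from by omega, ← Nat.mul_mod]),
            show (n + 1) * m = n * m + m from by ring, pow_add]
        have hsq : (-1 : ℤ) ^ (n * m) * (-1) ^ (n * m) = 1 := by
          rw [← pow_add, show n * m + n * m = 2 * (n * m) from by ring, pow_mul]
          norm_num
        have hm1 : -(-1 : ℤ) ^ m = (-1) ^ (m - 1) := by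
          rw [show m = (m - 1) + 1 from by omega, pow_succ, Nat.add_sub_cancel]
          ring
        rw [hp]
        linear_combination (-(-1 : ℤ) ^ m * s) * hsq + s * hm1
      have core : RepF A S ι (fun e => shSumU i fs (fun f₁ f₂ =>
          pairT A S ι (ωt i a f₁) (ηt (k - i) (b ++ [e]) f₂)
          + ηc (k - i) b (ω i (a ++ [e]) f₁) f₂)) := by
        refine RepF.shSumU' i fs (fun f₁ f₂ e =>
          pairT A S ι (ωt i a f₁) (ηt (k - i) (b ++ [e]) f₂)
          + ηc (k - i) b (ω i (a ++ [e]) f₁) f₂) ?_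
        intro f₁ f₂ hf1 hf2
        rw [hfs] at hf2
        refine (rep_pair hη hηt hηc (k - i) b f₂ (by omega) (by omega)
          (ωt i a f₁)).congr' (fun e => ?_)
        rw [hωt i a f₁ (by omega) hf1 e]
      refine core.zsmul ((-1 : ℤ) ^ (m - 1) * s) |>.congr' (fun e => ?_)
      rw [if_pos hcond2, if_pos hcond6, hsc, shSumU_add, smul_add]
    · have h2 : ¬ ((2 * i + 1 ≤ n ∧ 2 * (k - i) + 1 ≤ m) ∧ a.length = n - 2 * i - 1) :=
        fun h => hc (by omega)
      have h6 : ¬ ((2 * ((k - i) + 1) ≤ m ∧ 2 * i ≤ n) ∧ b.length = m - 2 * (k - i) - 2) :=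
        fun h => hc (by omega)
      exact RepF.zero.congr' (fun e => by rw [if_neg h2, if_neg h6, add_zero])
  have R3 : RepF A S ι (fun e =>
      (if (2 * (i + 1) ≤ n ∧ 2 * (k - i) ≤ m) ∧ a.length + 1 = n - 2 * i - 2 then
        ((1 : ℤ) * ((-1) ^ b.length * s)) •
          shSumU (k - i) fs (fun f₁ f₂ =>
            ωc i (a ++ [e]) (η (k - i) b f₁) f₂) else 0)) := by
    by_cases hc : (2 * (i + 1) ≤ n ∧ 2 * (k - i) ≤ m) ∧ a.length + 1 = n - 2 * i - 2
    · have core : RepF A S ι (fun e => shSumU (k - i) fs (fun f₁ f₂ =>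
          ωc i (a ++ [e]) (η (k - i) b f₁) f₂)) := by
        refine RepF.shSumU' (k - i) fs (fun f₁ f₂ e =>
          ωc i (a ++ [e]) (η (k - i) b f₁) f₂) ?_
        intro f₁ f₂ hf1 hf2
        rw [hfs] at hf2
        exact repr_ext hωt hωc hadj i a f₂ (by omega) (by omega) (η (k - i) b f₁)
      exact core.zsmul ((1 : ℤ) * ((-1) ^ b.length * s)) |>.congr'
        (fun e => by rw [if_pos hc])
    · exact RepF.zero.congr' (fun e => by rw [if_neg hc])
  have R5 : RepF A S ι (fun e =>
      (if (2 * ((k - i) + 1) ≤ m ∧ 2 * i ≤ n) ∧ b.length + 1 = m - 2 * (k - i) - 2 then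
        ((-(-1 : ℤ) ^ (n * m)) * ((-1) ^ a.length *
          ((-1) ^ (a.length * b.length) * s))) •
          shSumU i fs (fun f₁ f₂ =>
            ηc (k - i) (b ++ [e]) (ω i a f₁) f₂) else 0)) := by
    by_cases hc : (2 * ((k - i) + 1) ≤ m ∧ 2 * i ≤ n) ∧ b.length + 1 = m - 2 * (k - i) - 2
    · have core : RepF A S ι (fun e => shSumU i fs (fun f₁ f₂ =>
          ηc (k - i) (b ++ [e]) (ω i a f₁) f₂)) := by
        refine RepF.shSumU' i fs (fun f₁ f₂ e =>
          ηc (k - i) (b ++ [e]) (ω i a f₁) f₂) ?_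
        intro f₁ f₂ hf1 hf2
        rw [hfs] at hf2
        exact repr_ext hηt hηc hadj (k - i) b f₂ (by omega) (by omega) (ω i a f₁)
      exact core.zsmul _ |>.congr' (fun e => by rw [if_pos hc])
    · exact RepF.zero.congr' (fun e => by rw [if_neg hc])
  refine (R14.add (R26.add (R3.add R5))).congr' (fun e => by ring)

end Theorems
end
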